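/- arXiv:2504.00893 — 3 statements merged into one kernel-verified Lean document; each statement's English description precedes it below -/
import Mathlib

section
/- Let Ω ⊆ ℝ³ be the open ball of radius R > 0 centered at a point c. Then for every x ∈ ℝ³, ∫_Ω ‖x − y‖⁻² dy ≤ 4π R, where the integral is with respect to Lebesgue measure on ℝ³. -/
/-!
The kernel `y ↦ ‖x - y‖⁻²` is radially decreasing about `x`, so among all balls of radius `R` the
one centred at `x` carries the largest integral: moving from `ball c R` to `ball x R` trades
`ball c R \ ball x R`, where the kernel is at most `R⁻²`, for `ball x R \ ball c R`, a set of the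
same measure where the kernel is at least `R⁻²`. In polar coordinates the centred integral is
`4π ∫₀ᴿ r² · r⁻² dr = 4πR`.
-/

open MeasureTheory Metric Set Module

theorem preimage_sub_right_ball_zero {E : Type*} [SeminormedAddCommGroup E] (x : E) (r : ℝ) :
    (· - x) ⁻¹' ball 0 r = ball x r := by
  ext y
  simp [dist_eq_norm]

theorem setIntegral_le_setIntegral_of_measure_eq {α : Type*} [MeasurableSpace α]
    {μ : Measure α} {f : α → ℝ} {s t : Set α} {a : ℝ} (hs : MeasurableSet s)
    (ht : MeasurableSet t) (hμ : μ s = μ t) (hμs : μ s ≠ ⊤) (hfs : IntegrableOn f s μ)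
    (hft : IntegrableOn f t μ) (h_le : ∀ y ∈ s \ t, f y ≤ a)
    (h_ge : ∀ᵐ y ∂μ.restrict (t \ s), a ≤ f y) :
    ∫ y in s, f y ∂μ ≤ ∫ y in t, f y ∂μ := by
  have hμst : μ (s \ t) = μ (t \ s) :=
    measure_sdiff_symm hs.nullMeasurableSet ht.nullMeasurableSet hμ
      (measure_ne_top_of_subset inter_subset_left hμs)
  have hμts : μ (t \ s) ≠ ⊤ := hμst ▸ measure_ne_top_of_subset sdiff_subset hμs
  have h_sdiff : ∫ y in s \ t, f y ∂μ ≤ ∫ y in t \ s, f y ∂μ :=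
    calc ∫ y in s \ t, f y ∂μ ≤ ∫ _ in s \ t, a ∂μ :=
          setIntegral_mono_on (hfs.mono_set sdiff_subset) (integrableOn_const (hμst ▸ hμts))
            (hs.diff ht) h_le
      _ = ∫ _ in t \ s, a ∂μ := by simp only [setIntegral_const, measureReal_def, hμst]
      _ ≤ ∫ y in t \ s, f y ∂μ :=
          integral_mono_ae (integrableOn_const hμts) (hft.mono_set sdiff_subset) h_ge
  rw [← integral_inter_add_sdiff ht hfs, ← integral_inter_add_sdiff hs hft, inter_comm]
  gcongr

theorem setIntegral_ball_inv_norm_sub_sq {E : Type*} [NormedAddCommGroup E] [MeasurableSpace E]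
    [BorelSpace E] (μ : Measure E) [μ.IsAddRightInvariant] (x : E) (r : ℝ) :
    ∫ y in ball x r, (‖x - y‖ ^ 2)⁻¹ ∂μ = ∫ z in ball 0 r, (‖z‖ ^ 2)⁻¹ ∂μ := by
  simp_rw [norm_sub_rev x]
  rw [← preimage_sub_right_ball_zero]
  exact (measurePreserving_sub_right μ x).setIntegral_preimage_emb
    (measurableEmbedding_subRight x) (fun z ↦ (‖z‖ ^ 2)⁻¹) _

section HaarMeasure

variable {E : Type*} [NormedAddCommGroup E] [NormedSpace ℝ E] [FiniteDimensional ℝ E]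
  [MeasurableSpace E] [BorelSpace E] {μ : Measure E} [μ.IsAddHaarMeasure]

theorem integrableOn_ball_inv_norm_sq (hd : 2 < finrank ℝ E) (r : ℝ) :
    IntegrableOn (fun z : E ↦ (‖z‖ ^ 2)⁻¹) (ball 0 r) μ := by
  refine integrableOn_ball_of_norm_le_rpow (C := 1) (α := 2) (by omega) (by exact_mod_cast hd)
    (.of_forall fun z ↦ ?_) (by fun_prop)
  rw [one_mul, Real.rpow_neg (norm_nonneg z), norm_inv, norm_pow, norm_norm]
  norm_cast

theorem integrableOn_inv_norm_sub_sq (hd : 2 < finrank ℝ E) (x : E) {s : Set E}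
    (hs : Bornology.IsBounded s) : IntegrableOn (fun y ↦ (‖x - y‖ ^ 2)⁻¹) s μ := by
  obtain ⟨r, hsr⟩ := hs.subset_ball x
  refine IntegrableOn.mono_set ?_ hsr
  simp_rw [norm_sub_rev x]
  rw [← preimage_sub_right_ball_zero]
  exact ((measurePreserving_sub_right μ x).integrableOn_comp_preimage
    (measurableEmbedding_subRight x)).2 (integrableOn_ball_inv_norm_sq hd r)

theorem setIntegral_ball_inv_norm_sub_sq_le (hd : 2 < finrank ℝ E) (x c : E) {r : ℝ}
    (hr : 0 < r) :
    ∫ y in ball c r, (‖x - y‖ ^ 2)⁻¹ ∂μ ≤ ∫ y in ball x r, (‖x - y‖ ^ 2)⁻¹ ∂μ := by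
  have : Nontrivial E := Module.nontrivial_of_finrank_pos (R := ℝ) (by omega)
  refine setIntegral_le_setIntegral_of_measure_eq (a := (r ^ 2)⁻¹) measurableSet_ball
    measurableSet_ball (by simp only [Measure.addHaar_ball _ _ hr.le])
    measure_ball_lt_top.ne (integrableOn_inv_norm_sub_sq hd x isBounded_ball)
    (integrableOn_inv_norm_sub_sq hd x isBounded_ball) (fun y hy ↦ ?_) ?_
  · have : r ≤ ‖x - y‖ := by simpa [dist_eq_norm'] using hy.2
    gcongr
  -- The kernel takes the junk value `(‖0‖ ^ 2)⁻¹ = 0` at `y = x`, a null set.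
  · have hx : ∀ᵐ y ∂μ.restrict (ball x r \ ball c r), y ∉ ({x} : Set E) :=
      ae_restrict_of_ae (measure_eq_zero_iff_ae_notMem.1 (measure_singleton x))
    filter_upwards [hx, ae_restrict_mem (measurableSet_ball.diff measurableSet_ball)]
      with y hyx hy
    have : ‖x - y‖ < r := by simpa [dist_eq_norm'] using hy.1
    have : 0 < ‖x - y‖ := norm_pos_iff.2 (sub_ne_zero.2 (Ne.symm hyx))
    gcongr

theorem setIntegral_ball_fun_norm_addHaar [Nontrivial E] {F : Type*} [NormedAddCommGroup F]
    [NormedSpace ℝ F] (f : ℝ → F) (r : ℝ) :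
    ∫ z in ball 0 r, f ‖z‖ ∂μ =
      finrank ℝ E • μ.real (ball 0 1) • ∫ y in Ioo 0 r, y ^ (finrank ℝ E - 1) • f y := by
  have hball : ∀ z : E, (ball 0 r).indicator (fun z ↦ f ‖z‖) z = (Iio r).indicator f ‖z‖ :=
    fun z ↦ by simp [indicator]
  rw [← integral_indicator measurableSet_ball, funext hball, integral_fun_norm_addHaar,
    ← Ioi_inter_Iio, ← setIntegral_indicator measurableSet_Iio]
  simp only [indicator_smul_apply]

end HaarMeasure

theorem setIntegral_ball_zero_inv_norm_sq_fin_three {R : ℝ} (hR : 0 < R) :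
    ∫ z in ball (0 : EuclideanSpace ℝ (Fin 3)) R, (‖z‖ ^ 2)⁻¹ = 4 * Real.pi * R := by
  rw [setIntegral_ball_fun_norm_addHaar (fun r ↦ (r ^ 2)⁻¹), finrank_euclideanSpace_fin,
    measureReal_def, EuclideanSpace.volume_ball_fin_three]
  have : ∫ y in Ioo 0 R, y ^ (3 - 1) • (y ^ 2)⁻¹ = ∫ _ in Ioo 0 R, (1 : ℝ) :=
    setIntegral_congr_fun measurableSet_Ioo fun y hy ↦ mul_inv_cancel₀ (pow_pos hy.1 2).ne'
  rw [this, setIntegral_const, Real.volume_real_Ioo_of_le hR.le]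
  simp only [ENNReal.ofReal_one, one_pow, one_mul, sub_zero, smul_eq_mul, mul_one, nsmul_eq_mul]
  rw [ENNReal.toReal_ofReal (by positivity)]
  ring

theorem kernel_estimate_ball (R : ℝ) (hR : 0 < R)
    (c x : EuclideanSpace ℝ (Fin 3)) :
    ∫ y in Metric.ball c R, (‖x - y‖ ^ 2)⁻¹ ≤ 4 * Real.pi * R :=
  calc ∫ y in ball c R, (‖x - y‖ ^ 2)⁻¹
      ≤ ∫ y in ball x R, (‖x - y‖ ^ 2)⁻¹ :=
        setIntegral_ball_inv_norm_sub_sq_le (by simp) x c hR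
    _ = ∫ z in ball 0 R, (‖z‖ ^ 2)⁻¹ := setIntegral_ball_inv_norm_sub_sq volume x R
    _ = 4 * Real.pi * R := setIntegral_ball_zero_inv_norm_sq_fin_three hR
end

section
/- Let Ω ⊆ ℝ³ be a bounded measurable set with diameter at most d, and let B : ℝ³ → ℝ³ be an integrable vector field vanishing outside Ω whose squared norm is integrable on Ω. Let A be the Biot–Savart vector potential of B. Then ∫_Ω ‖A(x)‖² dx ≤ d² · ∫_Ω ‖B(x)‖² dx. -/
/-!
Since `‖u × v‖ ≤ ‖u‖ ‖v‖`, the potential is dominated by the positive integral operator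
`|A(x)| ≤ (1/4π) ∫_Ω |B(y)| / |x - y|² dy`. For `x` in `Ω` the set `Ω` lies in the closed ball of
radius `d` about `x`, and in polar coordinates `∫_{|z| ≤ d} |z|⁻² dz = 4πd`, so every row and every
column integral of the kernel `|x - y|⁻²` over `Ω` is at most `4πd`. The Schur test
(Cauchy–Schwarz in `y`, then Tonelli) bounds the `L²` norm of that operator by `4πd`, which
cancels the factor `1/4π`.
-/

open MeasureTheory

noncomputable section

/-- The cross product of two vectors in Euclidean 3-space. -/
def cross3 (u v : EuclideanSpace ℝ (Fin 3)) : EuclideanSpace ℝ (Fin 3) :=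
  (WithLp.equiv 2 (Fin 3 → ℝ)).symm
    ![u 1 * v 2 - u 2 * v 1, u 2 * v 0 - u 0 * v 2, u 0 * v 1 - u 1 * v 0]

/-- The Biot–Savart vector potential of a field `B` supported in `Ω`:
`A(x) = (1/(4π)) ∫_Ω B(y) × (x − y)/‖x − y‖³ dy`. -/
def biotSavart (Ω : Set (EuclideanSpace ℝ (Fin 3)))
    (B : EuclideanSpace ℝ (Fin 3) → EuclideanSpace ℝ (Fin 3))
    (x : EuclideanSpace ℝ (Fin 3)) : EuclideanSpace ℝ (Fin 3) :=
  (1 / (4 * Real.pi)) • ∫ y in Ω, (‖x - y‖ ^ 3)⁻¹ • cross3 (B y) (x - y)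

open scoped ENNReal

section SchurTest

variable {α β : Type*} [MeasurableSpace α] [MeasurableSpace β] {μ : Measure α} {ν : Measure β}

theorem sq_lintegral_mul_le_lintegral_mul_lintegral_mul_sq {w f : α → ℝ≥0∞}
    (hw : AEMeasurable w μ) (hf : AEMeasurable f μ) :
    (∫⁻ a, w a * f a ∂μ) ^ 2 ≤ (∫⁻ a, w a ∂μ) * ∫⁻ a, w a * f a ^ 2 ∂μ := by
  have hsplit : ∀ a, w a * f a = w a ^ (1 / 2 : ℝ) * (w a * f a ^ 2) ^ (1 / 2 : ℝ) := by
    intro a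
    rw [ENNReal.mul_rpow_of_nonneg _ _ (by norm_num), ← mul_assoc,
      ← ENNReal.rpow_add_of_nonneg _ _ (by norm_num) (by norm_num), ← ENNReal.rpow_natCast,
      ← ENNReal.rpow_mul]
    norm_num
  have holder := ENNReal.lintegral_mul_norm_pow_le hw (hw.mul (hf.pow_const 2))
    (by norm_num : (0 : ℝ) ≤ 1 / 2) (by norm_num : (0 : ℝ) ≤ 1 / 2) (by norm_num)
  calc (∫⁻ a, w a * f a ∂μ) ^ 2
      = (∫⁻ a, w a ^ (1 / 2 : ℝ) * (w a * f a ^ 2) ^ (1 / 2 : ℝ) ∂μ) ^ 2 := by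
        rw [lintegral_congr hsplit]
    _ ≤ ((∫⁻ a, w a ∂μ) ^ (1 / 2 : ℝ) * (∫⁻ a, w a * f a ^ 2 ∂μ) ^ (1 / 2 : ℝ)) ^ 2 := by
        gcongr
        exact holder
    _ = (∫⁻ a, w a ∂μ) * ∫⁻ a, w a * f a ^ 2 ∂μ := by
      rw [mul_pow, ← ENNReal.rpow_natCast, ← ENNReal.rpow_natCast (_ ^ _), ← ENNReal.rpow_mul,
        ← ENNReal.rpow_mul]
      norm_num

theorem lintegral_sq_lintegral_mul_le [SFinite μ] [SFinite ν] {K : α → β → ℝ≥0∞}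
    {f : β → ℝ≥0∞} (hK : Measurable (Function.uncurry K)) (hf : AEMeasurable f ν)
    {M N : ℝ≥0∞} (hM : ∀ᵐ x ∂μ, ∫⁻ y, K x y ∂ν ≤ M) (hN : ∀ᵐ y ∂ν, ∫⁻ x, K x y ∂μ ≤ N) :
    ∫⁻ x, (∫⁻ y, K x y * f y ∂ν) ^ 2 ∂μ ≤ M * N * ∫⁻ y, f y ^ 2 ∂ν := by
  have hKf : AEMeasurable (Function.uncurry fun x y => K x y * f y ^ 2) (μ.prod ν) :=
    hK.aemeasurable.mul (hf.pow_const 2).comp_snd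
  have hKf_right : AEMeasurable (fun x => ∫⁻ y, K x y * f y ^ 2 ∂ν) μ :=
    hKf.lintegral_prod_right'
  calc ∫⁻ x, (∫⁻ y, K x y * f y ∂ν) ^ 2 ∂μ
      ≤ ∫⁻ x, M * ∫⁻ y, K x y * f y ^ 2 ∂ν ∂μ := by
        refine lintegral_mono_ae ?_
        filter_upwards [hM] with x hx
        exact (sq_lintegral_mul_le_lintegral_mul_lintegral_mul_sq
          hK.of_uncurry_left.aemeasurable hf).trans (by gcongr)
    _ = M * ∫⁻ y, ∫⁻ x, K x y * f y ^ 2 ∂μ ∂ν := by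
        rw [lintegral_const_mul'' _ hKf_right, lintegral_lintegral_swap hKf]
    _ = M * ∫⁻ y, (∫⁻ x, K x y ∂μ) * f y ^ 2 ∂ν := by
        simp_rw [lintegral_mul_const _ hK.of_uncurry_right]
    _ ≤ M * ∫⁻ y, N * f y ^ 2 ∂ν := by
        gcongr M * ?_
        exact lintegral_mono_ae (by filter_upwards [hN] with y hy; gcongr)
    _ = M * N * ∫⁻ y, f y ^ 2 ∂ν := by
        rw [lintegral_const_mul'' _ (hf.pow_const 2), mul_assoc]

end SchurTest

section PolarCoordinates

open Set Metric

variable {E : Type*} [NormedAddCommGroup E] [NormedSpace ℝ E] [MeasurableSpace E] [BorelSpace E]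
  [Nontrivial E] [FiniteDimensional ℝ E] (μ : Measure E) [μ.IsAddHaarMeasure]

theorem lintegral_fun_norm_addHaar {g : ℝ → ℝ≥0∞} (hg : Measurable g) :
    ∫⁻ x, g ‖x‖ ∂μ = Module.finrank ℝ E * μ (ball 0 1) *
      ∫⁻ y in Ioi (0 : ℝ), ENNReal.ofReal (y ^ (Module.finrank ℝ E - 1)) * g y := by
  have hgm : Measurable fun p : sphere (0 : E) 1 × Ioi (0 : ℝ) => g p.2 :=
    hg.comp (measurable_subtype_coe.comp measurable_snd)
  calc
    ∫⁻ x, g ‖x‖ ∂μ = ∫⁻ x : ({(0)}ᶜ : Set E), g ‖x.1‖ ∂(μ.comap (↑)) := by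
      rw [lintegral_subtype_comap (measurableSet_singleton (0 : E)).compl (fun x => g ‖x‖),
        restrict_compl_singleton]
    _ = ∫⁻ p : sphere (0 : E) 1 × Ioi (0 : ℝ), g p.2
          ∂(μ.toSphere.prod (.volumeIoiPow (Module.finrank ℝ E - 1))) := by
      rw [← μ.measurePreserving_homeomorphUnitSphereProd.lintegral_comp hgm]
      simp
    _ = μ.toSphere univ * ∫⁻ r : Ioi (0 : ℝ),
          g r ∂(Measure.volumeIoiPow (Module.finrank ℝ E - 1)) := by
      rw [lintegral_prod _ hgm.aemeasurable]
      simp [lintegral_const, mul_comm]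
    _ = _ := by
      rw [Measure.toSphere_apply_univ, Measure.volumeIoiPow,
        lintegral_withDensity_eq_lintegral_mul₀ (by fun_prop)
          (g := fun r : Ioi (0 : ℝ) => g r) (hg.comp measurable_subtype_coe).aemeasurable]
      exact congrArg _ (lintegral_subtype_comap measurableSet_Ioi
        fun y => ENNReal.ofReal (y ^ (Module.finrank ℝ E - 1)) * g y)

end PolarCoordinates

section InverseSquareKernel

open Set Metric Real

theorem lintegral_closedBall_inv_enorm_sq (r : ℝ) :
    ∫⁻ z in closedBall (0 : EuclideanSpace ℝ (Fin 3)) r, (‖z‖ₑ ^ 2)⁻¹ =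
      ENNReal.ofReal (4 * π * r) := by
  set g : ℝ → ℝ≥0∞ := (Iic r).indicator fun t => (ENNReal.ofReal t ^ 2)⁻¹
  have hg : Measurable g :=
    (by fun_prop : Measurable fun t : ℝ => (ENNReal.ofReal t ^ 2)⁻¹).indicator measurableSet_Iic
  -- the polar volume element `t² dt` cancels the singularity
  have hradial : ∀ t ∈ Ioi (0 : ℝ), ENNReal.ofReal (t ^ 2) * g t = (Iic r).indicator 1 t := by
    intro t ht
    by_cases htr : t ≤ r
    · have ht0 : ENNReal.ofReal t ^ 2 ≠ 0 := pow_ne_zero 2 (ENNReal.ofReal_pos.2 ht).ne'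
      simp [g, htr, ENNReal.ofReal_pow ht.out.le, ENNReal.mul_inv_cancel ht0]
    · simp [g, htr]
  calc ∫⁻ z in closedBall (0 : EuclideanSpace ℝ (Fin 3)) r, (‖z‖ₑ ^ 2)⁻¹
      = ∫⁻ z : EuclideanSpace ℝ (Fin 3), g ‖z‖ := by
        rw [← lintegral_indicator measurableSet_closedBall]
        congr 1 with z
        by_cases hz : ‖z‖ ≤ r <;> simp [g, hz, indicator, ofReal_norm]
    _ = 3 * ENNReal.ofReal (π * 4 / 3) * volume (Ioc 0 r) := by
        rw [lintegral_fun_norm_addHaar volume hg, finrank_euclideanSpace_fin,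
          setLIntegral_congr_fun measurableSet_Ioi hradial, lintegral_indicator measurableSet_Iic]
        simp [inter_comm (Iic r), Ioi_inter_Iic]
    _ = ENNReal.ofReal (4 * π * r) := by
        rw [Real.volume_Ioc, sub_zero, ← ENNReal.ofReal_ofNat 3,
          ← ENNReal.ofReal_mul (by norm_num), ← ENNReal.ofReal_mul (by positivity)]
        ring_nf

theorem lintegral_closedBall_inv_enorm_sub_sq (x : EuclideanSpace ℝ (Fin 3)) (r : ℝ) :
    ∫⁻ y in closedBall x r, (‖x - y‖ₑ ^ 2)⁻¹ = ENNReal.ofReal (4 * π * r) := by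
  have hpre : (x - ·) ⁻¹' closedBall 0 r = closedBall x r := by
    ext y
    simp [dist_eq_norm, norm_sub_rev]
  have hcomp := (Measure.measurePreserving_sub_left volume x).setLIntegral_comp_preimage
    (measurableSet_closedBall (x := 0) (ε := r)) (f := fun z => (‖z‖ₑ ^ 2)⁻¹) (by fun_prop)
  rwa [hpre, lintegral_closedBall_inv_enorm_sq] at hcomp

theorem lintegral_inv_enorm_sub_sq_le_of_diam_le {Ω : Set (EuclideanSpace ℝ (Fin 3))}
    (hΩb : Bornology.IsBounded Ω) {d : ℝ} (hd : diam Ω ≤ d) {x : EuclideanSpace ℝ (Fin 3)}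
    (hx : x ∈ Ω) : ∫⁻ y in Ω, (‖x - y‖ₑ ^ 2)⁻¹ ≤ ENNReal.ofReal (4 * π * d) :=
  calc ∫⁻ y in Ω, (‖x - y‖ₑ ^ 2)⁻¹
      ≤ ∫⁻ y in closedBall x d, (‖x - y‖ₑ ^ 2)⁻¹ := lintegral_mono_set fun _ hy =>
        mem_closedBall.mpr ((dist_le_diam_of_mem hΩb hy hx).trans hd)
    _ = ENNReal.ofReal (4 * π * d) := lintegral_closedBall_inv_enorm_sub_sq x d

end InverseSquareKernel

theorem norm_cross3_le (u v : EuclideanSpace ℝ (Fin 3)) : ‖cross3 u v‖ ≤ ‖u‖ * ‖v‖ := by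
  have h0 : cross3 u v 0 = u 1 * v 2 - u 2 * v 1 := rfl
  have h1 : cross3 u v 1 = u 2 * v 0 - u 0 * v 2 := rfl
  have h2 : cross3 u v 2 = u 0 * v 1 - u 1 * v 0 := rfl
  rw [← sq_le_sq₀ (norm_nonneg _) (by positivity), mul_pow, EuclideanSpace.norm_sq_eq,
    EuclideanSpace.norm_sq_eq, EuclideanSpace.norm_sq_eq]
  simp only [Fin.sum_univ_three, Real.norm_eq_abs, sq_abs, h0, h1, h2]
  -- Lagrange's identity: `‖u‖² ‖v‖² - ‖u × v‖² = ⟪u, v⟫²`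
  nlinarith [sq_nonneg (u 0 * v 0 + u 1 * v 1 + u 2 * v 2)]

theorem enorm_smul_cross3_le (u v : EuclideanSpace ℝ (Fin 3)) :
    ‖(‖v‖ ^ 3)⁻¹ • cross3 u v‖ₑ ≤ (‖v‖ₑ ^ 2)⁻¹ * ‖u‖ₑ := by
  rcases eq_or_ne v 0 with rfl | hv
  · simp
  have hv' : 0 < ‖v‖ := norm_pos_iff.2 hv
  rw [← ofReal_norm, ← ofReal_norm, ← ofReal_norm, ← ENNReal.ofReal_pow (norm_nonneg _),
    ← ENNReal.ofReal_inv_of_pos (by positivity), ← ENNReal.ofReal_mul (by positivity)]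
  refine ENNReal.ofReal_le_ofReal ?_
  calc ‖(‖v‖ ^ 3)⁻¹ • cross3 u v‖ = (‖v‖ ^ 3)⁻¹ * ‖cross3 u v‖ := by
        rw [norm_smul, norm_inv, norm_pow, norm_norm]
    _ ≤ (‖v‖ ^ 3)⁻¹ * (‖u‖ * ‖v‖) := by gcongr; exact norm_cross3_le u v
    _ = (‖v‖ ^ 2)⁻¹ * ‖u‖ := by field_simp

theorem enorm_biotSavart_le (Ω : Set (EuclideanSpace ℝ (Fin 3)))
    (B : EuclideanSpace ℝ (Fin 3) → EuclideanSpace ℝ (Fin 3)) (x : EuclideanSpace ℝ (Fin 3)) :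
    ‖biotSavart Ω B x‖ₑ ≤
      ENNReal.ofReal (1 / (4 * Real.pi)) * ∫⁻ y in Ω, (‖x - y‖ₑ ^ 2)⁻¹ * ‖B y‖ₑ := by
  rw [biotSavart, enorm_smul, ← ofReal_norm, Real.norm_of_nonneg (by positivity)]
  gcongr
  exact (enorm_integral_le_lintegral_enorm _).trans
    (lintegral_mono fun y => enorm_smul_cross3_le _ _)

theorem integral_norm_sq_le_of_lintegral_enorm_sq_le {α E : Type*} [MeasurableSpace α]
    {μ : Measure α} [NormedAddCommGroup E] {f : α → E} {c : ℝ} (hc : 0 ≤ c)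
    (h : ∫⁻ a, ‖f a‖ₑ ^ 2 ∂μ ≤ ENNReal.ofReal c) : ∫ a, ‖f a‖ ^ 2 ∂μ ≤ c := by
  rw [← ENNReal.ofReal_le_ofReal_iff hc, ← Real.enorm_of_nonneg (by positivity)]
  refine (enorm_integral_le_lintegral_enorm _).trans (le_of_eq_of_le ?_ h)
  simp_rw [Real.enorm_of_nonneg (sq_nonneg _), ENNReal.ofReal_pow (norm_nonneg _), ofReal_norm]

theorem lintegral_enorm_biotSavart_sq_le {Ω : Set (EuclideanSpace ℝ (Fin 3))}
    (hΩ : MeasurableSet Ω) (hΩb : Bornology.IsBounded Ω) {d : ℝ} (hd : Metric.diam Ω ≤ d)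
    {B : EuclideanSpace ℝ (Fin 3) → EuclideanSpace ℝ (Fin 3)}
    (hB : AEMeasurable (fun y => ‖B y‖ₑ) (volume.restrict Ω)) :
    ∫⁻ x in Ω, ‖biotSavart Ω B x‖ₑ ^ 2 ≤ ENNReal.ofReal d ^ 2 * ∫⁻ y in Ω, ‖B y‖ₑ ^ 2 := by
  set K : EuclideanSpace ℝ (Fin 3) → EuclideanSpace ℝ (Fin 3) → ℝ≥0∞ :=
    fun x y => (‖x - y‖ₑ ^ 2)⁻¹
  set M := ENNReal.ofReal (4 * Real.pi * d)
  have hK : Measurable (Function.uncurry K) := by fun_prop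
  have hKx : ∀ᵐ x ∂volume.restrict Ω, ∫⁻ y in Ω, K x y ≤ M :=
    ae_restrict_of_forall_mem hΩ fun x hx => lintegral_inv_enorm_sub_sq_le_of_diam_le hΩb hd hx
  have hKy : ∀ᵐ y ∂volume.restrict Ω, ∫⁻ x in Ω, K x y ≤ M :=
    ae_restrict_of_forall_mem hΩ fun y hy => by
      simpa only [K, enorm_sub_rev] using lintegral_inv_enorm_sub_sq_le_of_diam_le hΩb hd hy
  have hd0 : 0 ≤ d := Metric.diam_nonneg.trans hd
  calc ∫⁻ x in Ω, ‖biotSavart Ω B x‖ₑ ^ 2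
      ≤ ∫⁻ x in Ω, (ENNReal.ofReal (1 / (4 * Real.pi)) * ∫⁻ y in Ω, K x y * ‖B y‖ₑ) ^ 2 := by
        gcongr with x
        exact enorm_biotSavart_le Ω B x
    _ = ENNReal.ofReal (1 / (4 * Real.pi)) ^ 2 *
          ∫⁻ x in Ω, (∫⁻ y in Ω, K x y * ‖B y‖ₑ) ^ 2 := by
        simp_rw [mul_pow]
        exact lintegral_const_mul' _ _ (by finiteness)
    _ ≤ ENNReal.ofReal (1 / (4 * Real.pi)) ^ 2 * (M * M * ∫⁻ y in Ω, ‖B y‖ₑ ^ 2) := by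
        gcongr
        exact lintegral_sq_lintegral_mul_le hK hB hKx hKy
    _ = ENNReal.ofReal d ^ 2 * ∫⁻ y in Ω, ‖B y‖ₑ ^ 2 := by
        rw [← mul_assoc, ← ENNReal.ofReal_mul (by positivity), ← ENNReal.ofReal_pow (by positivity),
          ← ENNReal.ofReal_mul (by positivity), ← ENNReal.ofReal_pow hd0]
        congr 2
        field_simp

theorem biotSavart_L2_bound_general (Ω : Set (EuclideanSpace ℝ (Fin 3)))
    (hΩ : MeasurableSet Ω) (hΩb : Bornology.IsBounded Ω)
    (d : ℝ) (hd : Metric.diam Ω ≤ d)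
    (B : EuclideanSpace ℝ (Fin 3) → EuclideanSpace ℝ (Fin 3))
    (hB2 : IntegrableOn (fun x => ‖B x‖ ^ 2) Ω) :
    ∫ x in Ω, ‖biotSavart Ω B x‖ ^ 2 ≤ d ^ 2 * ∫ x in Ω, ‖B x‖ ^ 2 := by
  have hB : AEMeasurable (fun y => ‖B y‖ₑ) (volume.restrict Ω) := by
    simpa [Real.sqrt_sq, ofReal_norm] using hB2.aemeasurable.sqrt.ennreal_ofReal
  have hB2' : ∫⁻ y in Ω, ‖B y‖ₑ ^ 2 = ENNReal.ofReal (∫ y in Ω, ‖B y‖ ^ 2) := by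
    rw [ofReal_integral_eq_lintegral_ofReal hB2 (ae_of_all _ fun _ => sq_nonneg _)]
    simp_rw [ENNReal.ofReal_pow (norm_nonneg _), ofReal_norm]
  have hd0 : 0 ≤ d := Metric.diam_nonneg.trans hd
  refine integral_norm_sq_le_of_lintegral_enorm_sq_le (by positivity) ?_
  calc ∫⁻ x in Ω, ‖biotSavart Ω B x‖ₑ ^ 2
      ≤ ENNReal.ofReal d ^ 2 * ∫⁻ y in Ω, ‖B y‖ₑ ^ 2 :=
        lintegral_enorm_biotSavart_sq_le hΩ hΩb hd hB
    _ = ENNReal.ofReal (d ^ 2 * ∫ x in Ω, ‖B x‖ ^ 2) := by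
        rw [hB2', ← ENNReal.ofReal_pow hd0, ← ENNReal.ofReal_mul (sq_nonneg d)]

theorem biotSavart_L2_bound (Ω : Set (EuclideanSpace ℝ (Fin 3)))
    (hΩ : MeasurableSet Ω) (hΩb : Bornology.IsBounded Ω)
    (d : ℝ) (hd : Metric.diam Ω ≤ d)
    (B : EuclideanSpace ℝ (Fin 3) → EuclideanSpace ℝ (Fin 3))
    (hB : Integrable B) (hB0 : ∀ x ∉ Ω, B x = 0)
    (hB2 : IntegrableOn (fun x => ‖B x‖ ^ 2) Ω) :
    ∫ x in Ω, ‖biotSavart Ω B x‖ ^ 2 ≤ d ^ 2 * ∫ x in Ω, ‖B x‖ ^ 2 :=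
  biotSavart_L2_bound_general Ω hΩ hΩb d hd B hB2

end
end

section
/- (Biot–Savart Lemma, curl identity.) Let B : ℝ³ → ℝ³ be a smooth (C^∞) vector field with compact support contained in a set Ω, satisfying div B = 0 everywhere, where div B = ∂₁B₁ + ∂₂B₂ + ∂₃B₃. Let A be the Biot–Savart vector potential of B. Then A is differentiable and curl A = B everywhere on ℝ³, where curl A is the vector field with components (curl A)₁ = ∂₂A₃ − ∂₃A₂, (curl A)₂ = ∂₃A₁ − ∂₁A₃, (curl A)₃ = ∂₁A₂ − ∂₂A₁ (partial derivatives taken in the standard coordinates of ℝ³). -/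
open MeasureTheory Set Metric Filter
open scoped Topology

noncomputable section

local notation "E3" => EuclideanSpace ℝ (Fin 3)

/-- The partial derivative of a scalar function on Euclidean 3-space in the
direction of the `i`-th standard basis vector. -/
def pderiv3 (i : Fin 3) (f : EuclideanSpace ℝ (Fin 3) → ℝ)
    (x : EuclideanSpace ℝ (Fin 3)) : ℝ :=
  fderiv ℝ f x (EuclideanSpace.single i 1)

/-- The curl of a vector field on Euclidean 3-space. -/
def curl3 (F : EuclideanSpace ℝ (Fin 3) → EuclideanSpace ℝ (Fin 3))
    (x : EuclideanSpace ℝ (Fin 3)) : EuclideanSpace ℝ (Fin 3) :=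
  (WithLp.equiv 2 (Fin 3 → ℝ)).symm
    ![pderiv3 1 (fun y => F y 2) x - pderiv3 2 (fun y => F y 1) x,
      pderiv3 2 (fun y => F y 0) x - pderiv3 0 (fun y => F y 2) x,
      pderiv3 0 (fun y => F y 1) x - pderiv3 1 (fun y => F y 0) x]

/-- The divergence of a vector field on Euclidean 3-space. -/
def div3 (F : EuclideanSpace ℝ (Fin 3) → EuclideanSpace ℝ (Fin 3))
    (x : EuclideanSpace ℝ (Fin 3)) : ℝ :=
  pderiv3 0 (fun y => F y 0) x + pderiv3 1 (fun y => F y 1) x +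
    pderiv3 2 (fun y => F y 2) x

lemma finrank_E3 : Module.finrank ℝ (EuclideanSpace ℝ (Fin 3)) = 3 := by
  simp [finrank_euclideanSpace]

lemma integral_volumeIoiPow (n : ℕ) (h : ℝ → ℝ) :
    ∫ r : Set.Ioi (0:ℝ), h r ∂(Measure.volumeIoiPow n)
      = ∫ r in Set.Ioi (0:ℝ), r ^ n * h r := by
  simp only [Measure.volumeIoiPow, ENNReal.ofReal]
  rw [integral_withDensity_eq_integral_smul
      ((measurable_subtype_coe.pow_const _).real_toNNReal),
    integral_subtype_comap measurableSet_Ioi fun a => Real.toNNReal (a ^ n) • h a,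
    setIntegral_congr_fun measurableSet_Ioi fun x hx => ?_]
  rw [NNReal.smul_def, Real.coe_toNNReal _ (pow_nonneg hx.out.le _), smul_eq_mul]

lemma integrable_volumeIoiPow_iff (n : ℕ) (h : ℝ → ℝ) :
    Integrable (fun r : Set.Ioi (0:ℝ) => h r) (Measure.volumeIoiPow n)
      ↔ IntegrableOn (fun r => r ^ n * h r) (Set.Ioi (0:ℝ)) := by
  simp only [Measure.volumeIoiPow, ENNReal.ofReal]
  rw [integrable_withDensity_iff_integrable_smul
      ((measurable_subtype_coe.pow_const _).real_toNNReal)]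
  rw [IntegrableOn, ← map_comap_subtype_coe measurableSet_Ioi,
    (MeasurableEmbedding.subtype_coe measurableSet_Ioi).integrable_map_iff]
  constructor
  · intro H
    refine H.congr (ae_of_all _ fun x => ?_)
    simp [NNReal.smul_def, Real.coe_toNNReal _ (pow_nonneg x.2.out.le n), Function.comp]
  · intro H
    refine H.congr (ae_of_all _ fun x => ?_)
    simp [NNReal.smul_def, Real.coe_toNNReal _ (pow_nonneg x.2.out.le n), Function.comp]

lemma polar_integrable_iff (g : EuclideanSpace ℝ (Fin 3) → ℝ) :
    Integrable g volume ↔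
      Integrable (fun p : sphere (0:E3) 1 × Set.Ioi (0:ℝ) => g (p.2.1 • p.1.1))
        ((volume : Measure E3).toSphere.prod (Measure.volumeIoiPow 2)) := by
  have mp := (volume : Measure E3).measurePreserving_homeomorphUnitSphereProd
  rw [finrank_E3] at mp
  have h2 := mp.integrable_comp_emb (Homeomorph.measurableEmbedding _)
    (g := fun p : sphere (0:E3) 1 × Set.Ioi (0:ℝ) => g (p.2.1 • p.1.1))
  rw [← h2]
  have h3 : ((fun p : sphere (0:E3) 1 × Set.Ioi (0:ℝ) => g (p.2.1 • p.1.1)) ∘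
      (homeomorphUnitSphereProd E3)) = fun z : ({0}ᶜ : Set E3) => g z.1 := by
    funext z
    simp only [Function.comp_apply, homeomorphUnitSphereProd_apply_snd_coe,
      homeomorphUnitSphereProd_apply_fst_coe]
    rw [smul_inv_smul₀ (norm_ne_zero_iff.2 z.2)]
  rw [h3]
  have h4 : (fun z : ({0}ᶜ : Set E3) => g z.1) = g ∘ (Subtype.val : ({0}ᶜ : Set E3) → E3) := rfl
  rw [h4, ← (MeasurableEmbedding.subtype_coe (measurableSet_singleton (0:E3)).compl).integrable_map_iff,
    map_comap_subtype_coe (measurableSet_singleton (0:E3)).compl,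
    MeasureTheory.restrict_compl_singleton]

lemma polar_integral (g : EuclideanSpace ℝ (Fin 3) → ℝ) (hg : Integrable g volume) :
    ∫ z, g z = ∫ ω : sphere (0:E3) 1, (∫ r in Set.Ioi (0:ℝ), r ^ 2 * g (r • ω.1))
      ∂(volume : Measure E3).toSphere := by
  have mp := (volume : Measure E3).measurePreserving_homeomorphUnitSphereProd
  rw [finrank_E3] at mp
  have h0 : ∫ z, g z = ∫ z : ({0}ᶜ : Set E3), g z.1 ∂(volume.comap Subtype.val) := by
    rw [integral_subtype_comap (measurableSet_singleton _).compl fun x => g x,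
      MeasureTheory.restrict_compl_singleton]
  rw [h0]
  have h1 : ∫ z : ({0}ᶜ : Set E3), g z.1 ∂(volume.comap Subtype.val)
      = ∫ p : sphere (0:E3) 1 × Set.Ioi (0:ℝ), g (p.2.1 • p.1.1)
          ∂((volume : Measure E3).toSphere.prod (Measure.volumeIoiPow 2)) := by
    rw [← mp.integral_comp (Homeomorph.measurableEmbedding _)
      (fun p : sphere (0:E3) 1 × Set.Ioi (0:ℝ) => g (p.2.1 • p.1.1))]
    congr 1
    funext z
    simp only [homeomorphUnitSphereProd_apply_snd_coe, homeomorphUnitSphereProd_apply_fst_coe]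
    rw [smul_inv_smul₀ (norm_ne_zero_iff.2 z.2)]
  rw [h1, integral_prod _ ((polar_integrable_iff g).1 hg)]
  congr 1
  funext ω
  exact integral_volumeIoiPow 2 (fun r => g (r • ω.1))

lemma integrableOn_inv_sq_norm (R : ℝ) :
    IntegrableOn (fun z : E3 => (‖z‖ ^ 2)⁻¹) (closedBall (0:E3) R) volume := by
  classical
  rw [← integrable_indicator_iff measurableSet_closedBall]
  rw [polar_integrable_iff]
  have key : (fun p : sphere (0:E3) 1 × Set.Ioi (0:ℝ) =>
      (closedBall (0:E3) R).indicator (fun z => (‖z‖ ^ 2)⁻¹) (p.2.1 • p.1.1))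
      = fun p => (1:ℝ) * (if p.2.1 ≤ R then (p.2.1 ^ 2)⁻¹ else 0) := by
    funext p
    have hn : ‖p.2.1 • p.1.1‖ = p.2.1 := by
      rw [norm_smul, mem_sphere_zero_iff_norm.1 p.1.2, mul_one,
        Real.norm_eq_abs, abs_of_pos p.2.2.out]
    rw [Set.indicator_apply]
    simp only [mem_closedBall, dist_zero_right, hn, one_mul]
  rw [key]
  have hh : Integrable (fun r : Set.Ioi (0:ℝ) => if r.1 ≤ R then ((r.1:ℝ) ^ 2)⁻¹ else 0)
      (Measure.volumeIoiPow 2) := by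
    apply (integrable_volumeIoiPow_iff 2 (fun s : ℝ => if s ≤ R then (s ^ 2)⁻¹ else 0)).2
    have hmeas : Measurable fun r : ℝ => r ^ 2 * (if r ≤ R then (r ^ 2)⁻¹ else 0) := by
      apply Measurable.mul (by fun_prop)
      exact Measurable.ite measurableSet_Iic (by fun_prop) measurable_const
    refine Integrable.mono' (g := (Set.Ioc (0:ℝ) R).indicator fun _ => (1:ℝ)) ?_
      (hmeas.aestronglyMeasurable.restrict) ?_
    · rw [integrable_indicator_iff measurableSet_Ioc]
      exact integrableOn_const measure_Ioc_lt_top.ne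
    · filter_upwards [ae_restrict_mem measurableSet_Ioi] with r hr
      by_cases hrR : r ≤ R
      · rw [if_pos hrR, mul_inv_cancel₀ (pow_ne_zero 2 (ne_of_gt hr.out))]
        rw [Real.norm_eq_abs, abs_one, Set.indicator_apply, if_pos (Set.mem_Ioc.2 ⟨hr.out, hrR⟩)]
      · rw [if_neg hrR, mul_zero]
        simpa using Set.indicator_nonneg (fun _ _ => zero_le_one) r
  exact (integrable_const (1:ℝ)).mul_prod hh

lemma toSphere_univ_E3 : ((volume : Measure E3).toSphere Set.univ).toReal = 4 * Real.pi := by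
  rw [Measure.toSphere_apply_univ, finrank_E3]
  rw [EuclideanSpace.volume_ball (Fin 3) 0 1]
  have h32 : Real.Gamma ((3:ℝ)/2) = (1/2) * Real.sqrt Real.pi := by
    have : ((3:ℝ)/2) = 1/2 + 1 := by norm_num
    rw [this, Real.Gamma_add_one (by norm_num), Real.Gamma_one_half_eq]
  have h52 : Real.Gamma ((Fintype.card (Fin 3) : ℝ)/2 + 1) = (3/4) * Real.sqrt Real.pi := by
    rw [Fintype.card_fin]
    have : ((3:ℕ):ℝ)/2 + 1 = 3/2 + 1 := by norm_num
    rw [this, Real.Gamma_add_one (by norm_num), h32]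
    ring
  rw [h52, Fintype.card_fin]
  have hs : Real.sqrt Real.pi ^ 3 / ((3/4) * Real.sqrt Real.pi) = (4/3) * Real.pi := by
    have h0 : Real.sqrt Real.pi ≠ 0 := by
      positivity
    have h1 : Real.sqrt Real.pi ^ 3 = Real.pi * Real.sqrt Real.pi := by
      rw [pow_succ, pow_two, Real.mul_self_sqrt Real.pi_pos.le]
    rw [h1]; field_simp
  rw [hs]
  rw [ENNReal.ofReal_one, one_pow, one_mul, ENNReal.toReal_mul, ENNReal.toReal_ofReal (by positivity)]
  simp; ring

lemma integrable_kernel_pairing (u : EuclideanSpace ℝ (Fin 3) → ℝ) (hu : ContDiff ℝ (⊤ : ℕ∞) u)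
    (hc : HasCompactSupport u) (x : E3) :
    Integrable (fun z : E3 => (‖z‖ ^ 3)⁻¹ * fderiv ℝ u (x - z) z) volume := by
  obtain ⟨C, hC⟩ := (hu.continuous_fderiv (by simp)).bounded_above_of_compact_support (hc.fderiv ℝ)
  obtain ⟨R₀, hR₀⟩ := hc.isBounded.subset_closedBall 0
  set R : ℝ := ‖x‖ + R₀ with hR
  set C' : ℝ := max C 0 with hC'
  have hg : Integrable (fun z : E3 =>
      C' * (closedBall (0:E3) R).indicator (fun z => (‖z‖ ^ 2)⁻¹) z) volume := by
    exact ((integrable_indicator_iff measurableSet_closedBall).2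
      (integrableOn_inv_sq_norm R)).const_mul C'
  have hcont : Continuous fun z : E3 => fderiv ℝ u (x - z) z :=
    ((hu.continuous_fderiv (by simp)).comp (continuous_const.sub continuous_id)).clm_apply
      continuous_id
  refine hg.mono' ?_ (ae_of_all _ fun z => ?_)
  · exact (((measurable_norm.pow_const 3).inv).mul hcont.measurable).aestronglyMeasurable
  · rw [Real.norm_eq_abs, abs_mul]
    by_cases hz : fderiv ℝ u (x - z) = 0
    · rw [hz]
      simp only [ContinuousLinearMap.zero_apply, abs_zero, mul_zero]
      have : (0:ℝ) ≤ (closedBall (0:E3) R).indicator (fun z => (‖z‖ ^ 2)⁻¹) z :=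
        Set.indicator_nonneg (fun y _ => by positivity) z
      positivity
    · have hmem : x - z ∈ tsupport u := support_fderiv_subset ℝ (Function.mem_support.2 hz)
      have hzR : z ∈ closedBall (0:E3) R := by
        rw [mem_closedBall, dist_zero_right]
        calc ‖z‖ = ‖x - (x - z)‖ := by rw [sub_sub_cancel]
        _ ≤ ‖x‖ + ‖x - z‖ := norm_sub_le _ _
        _ ≤ ‖x‖ + R₀ := by
            have := hR₀ hmem
            rw [mem_closedBall, dist_zero_right] at this
            linarith
      rw [Set.indicator_of_mem hzR]
      by_cases hz0 : z = 0
      · subst hz0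
        simp
      · have hzn : ‖z‖ ≠ 0 := norm_ne_zero_iff.2 hz0
        have hb : |fderiv ℝ u (x - z) z| ≤ C' * ‖z‖ := by
          calc |fderiv ℝ u (x - z) z| ≤ ‖fderiv ℝ u (x - z)‖ * ‖z‖ :=
            (fderiv ℝ u (x - z)).le_opNorm z
          _ ≤ C' * ‖z‖ := by
              apply mul_le_mul_of_nonneg_right _ (norm_nonneg z)
              exact le_trans (hC (x - z)) (le_max_left _ _)
        calc |(‖z‖ ^ 3)⁻¹| * |fderiv ℝ u (x - z) z|
            = (‖z‖ ^ 3)⁻¹ * |fderiv ℝ u (x - z) z| := by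
              rw [abs_of_nonneg (by positivity)]
        _ ≤ (‖z‖ ^ 3)⁻¹ * (C' * ‖z‖) := by
              apply mul_le_mul_of_nonneg_left hb (by positivity)
        _ = C' * (‖z‖ ^ 2)⁻¹ := by field_simp

lemma core_identity (u : EuclideanSpace ℝ (Fin 3) → ℝ) (hu : ContDiff ℝ (⊤ : ℕ∞) u)
    (hc : HasCompactSupport u) (x : E3) :
    ∫ z : E3, (‖z‖ ^ 3)⁻¹ * fderiv ℝ u (x - z) z = 4 * Real.pi * u x := by
  obtain ⟨C, hC⟩ := (hu.continuous_fderiv (by simp)).bounded_above_of_compact_support (hc.fderiv ℝ)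
  obtain ⟨R₀, hR₀pos, hR₀⟩ := hc.isBounded.subset_closedBall_lt 0 0
  set R : ℝ := ‖x‖ + R₀ with hRdef
  rw [polar_integral _ (integrable_kernel_pairing u hu hc x)]
  have inner : ∀ ω : sphere (0:E3) 1,
      ∫ r in Set.Ioi (0:ℝ), r ^ 2 * ((‖r • ω.1‖ ^ 3)⁻¹ * fderiv ℝ u (x - r • ω.1) (r • ω.1))
        = u x := by
    intro ω
    have hω : ‖ω.1‖ = 1 := mem_sphere_zero_iff_norm.1 ω.2
    have hstep : ∀ r ∈ Set.Ioi (0:ℝ),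
        r ^ 2 * ((‖r • ω.1‖ ^ 3)⁻¹ * fderiv ℝ u (x - r • ω.1) (r • ω.1))
          = fderiv ℝ u (x - r • ω.1) ω.1 := by
      intro r hr
      have hr0 : (0:ℝ) < r := hr
      have hn : ‖r • ω.1‖ = r := by
        rw [norm_smul, hω, mul_one, Real.norm_eq_abs, abs_of_pos hr0]
      rw [hn, (fderiv ℝ u (x - r • ω.1)).map_smul, smul_eq_mul]
      field_simp
    rw [setIntegral_congr_fun measurableSet_Ioi hstep]
    -- FTC on (0, ∞)
    have hderiv : ∀ r ∈ Set.Ioi (0:ℝ),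
        HasDerivAt (fun r : ℝ => -u (x - r • ω.1)) (fderiv ℝ u (x - r • ω.1) ω.1) r := by
      intro r _
      have h1 : HasDerivAt (fun r : ℝ => x - r • ω.1) (-ω.1) r := by
        simpa using ((hasDerivAt_id r).smul_const ω.1).const_sub x
      have h2 := ((hu.differentiable (by simp)) (x - r • ω.1)).hasFDerivAt.comp_hasDerivAt r h1
      have h3 := h2.neg
      exact (by simpa [Function.comp_def] using h3 :
        HasDerivAt (-fun r : ℝ => u (x - r • ω.1)) (fderiv ℝ u (x - r • ω.1) ω.1) r)
    have hcont : ContinuousWithinAt (fun r : ℝ => -u (x - r • ω.1)) (Set.Ici 0) 0 := by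
      apply Continuous.continuousWithinAt
      exact (hu.continuous.comp (continuous_const.sub (continuous_id.smul continuous_const))).neg
    have hint : IntegrableOn (fun r : ℝ => fderiv ℝ u (x - r • ω.1) ω.1) (Set.Ioi (0:ℝ)) := by
      set C' : ℝ := max C 0 with hC'
      refine Integrable.mono' (g := (Set.Ioc (0:ℝ) (‖x‖ + R₀)).indicator fun _ => C') ?_ ?_ ?_
      · rw [integrable_indicator_iff measurableSet_Ioc]
        exact integrableOn_const measure_Ioc_lt_top.ne
      · apply Continuous.aestronglyMeasurable
        exact ((hu.continuous_fderiv (by simp)).comp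
          (continuous_const.sub (continuous_id.smul continuous_const))).clm_apply continuous_const
      · filter_upwards [ae_restrict_mem measurableSet_Ioi] with r hr
        by_cases hzero : fderiv ℝ u (x - r • ω.1) = 0
        · rw [hzero]
          simp only [ContinuousLinearMap.zero_apply, norm_zero]
          exact Set.indicator_nonneg (fun _ _ => le_max_right _ _) r
        · have hmem : x - r • ω.1 ∈ tsupport u :=
            support_fderiv_subset ℝ (Function.mem_support.2 hzero)
          have hrle : r ≤ ‖x‖ + R₀ := by
            have h1 := hR₀ hmem
            rw [mem_closedBall, dist_zero_right] at h1
            have h2 : ‖r • ω.1‖ - ‖x‖ ≤ ‖x - r • ω.1‖ := by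
              have := norm_sub_norm_le (r • ω.1) x
              rw [← norm_neg (r • ω.1 - x), neg_sub] at this
              linarith
            have h3 : ‖r • ω.1‖ = r := by
              rw [norm_smul, mem_sphere_zero_iff_norm.1 ω.2, mul_one, Real.norm_eq_abs,
                abs_of_pos hr.out]
            linarith
          rw [Set.indicator_of_mem (Set.mem_Ioc.2 ⟨hr.out, hrle⟩)]
          calc ‖fderiv ℝ u (x - r • ω.1) ω.1‖
              ≤ ‖fderiv ℝ u (x - r • ω.1)‖ * ‖ω.1‖ := (fderiv ℝ u _).le_opNorm _
          _ = ‖fderiv ℝ u (x - r • ω.1)‖ := by rw [mem_sphere_zero_iff_norm.1 ω.2, mul_one]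
          _ ≤ C' := le_trans (hC _) (le_max_left _ _)
    have htend : Tendsto (fun r : ℝ => -u (x - r • ω.1)) atTop (nhds 0) := by
      have hev : ∀ᶠ r : ℝ in atTop, -u (x - r • ω.1) = 0 := by
        filter_upwards [eventually_ge_atTop (‖x‖ + R₀ + 1)] with r hr
        have hnot : x - r • ω.1 ∉ tsupport u := by
          intro hmem
          have h1 := hR₀ hmem
          rw [mem_closedBall, dist_zero_right] at h1
          have hr0 : (0:ℝ) ≤ r := by
            have := norm_nonneg x
            linarith
          have h3 : ‖r • ω.1‖ = r := by
            rw [norm_smul, mem_sphere_zero_iff_norm.1 ω.2, mul_one, Real.norm_eq_abs,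
              abs_of_nonneg hr0]
          have h4 : ‖r • ω.1‖ - ‖x‖ ≤ ‖x - r • ω.1‖ := by
            have := norm_sub_norm_le (r • ω.1) x
            rw [← norm_neg (r • ω.1 - x), neg_sub] at this
            linarith
          rw [h3] at h4
          linarith
        rw [image_eq_zero_of_notMem_tsupport hnot, neg_zero]
      exact tendsto_const_nhds.congr' (by filter_upwards [hev] with r h; exact h.symm)
    have := integral_Ioi_of_hasDerivAt_of_tendsto hcont hderiv hint htend
    rw [this]
    simp
  rw [integral_congr_ae (ae_of_all _ inner)]
  rw [integral_const, smul_eq_mul, measureReal_def, toSphere_univ_E3]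
lemma abs_coord_le_norm (z : E3) (l : Fin 3) : |z l| ≤ ‖z‖ := by
  rw [EuclideanSpace.norm_eq z, ← Real.sqrt_sq_eq_abs]
  apply Real.sqrt_le_sqrt
  have : |z l| ^ 2 ≤ ∑ i : Fin 3, ‖z i‖ ^ 2 := by
    apply Finset.single_le_sum (f := fun i => ‖z i‖ ^ 2) (fun i _ => by positivity)
      (Finset.mem_univ l) |>.trans_eq' ?_
    simp [Real.norm_eq_abs, sq_abs]
  simpa [sq_abs] using this

lemma euclid_decomp (t : E3) :
    (Finset.univ.sum fun q : Fin 3 => t q • EuclideanSpace.single q (1:ℝ)) = t := by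
  ext i
  rw [show ((Finset.univ.sum fun q : Fin 3 => t q • EuclideanSpace.single q (1:ℝ)) i)
    = Finset.univ.sum fun q : Fin 3 => (t q • EuclideanSpace.single q (1:ℝ)) i from by
      rw [WithLp.ofLp_sum]; exact Finset.sum_apply i Finset.univ _]
  simp [EuclideanSpace.single_apply]

lemma clm_apply_decomp (L : E3 →L[ℝ] ℝ) (t : E3) :
    L t = ∑ q : Fin 3, t q * L (EuclideanSpace.single q 1) := by
  conv_lhs => rw [← euclid_decomp t]
  rw [map_sum]
  simp [smul_eq_mul]

/-- the Biot–Savart kernel components -/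
def Kker (l : Fin 3) : E3 → ℝ := fun z => (‖z‖ ^ 3)⁻¹ * z l

lemma Kker_abs_le (l : Fin 3) (z : E3) : |Kker l z| ≤ (‖z‖ ^ 2)⁻¹ := by
  by_cases hz : z = 0
  · subst hz; simp [Kker]
  · have hzn : (0:ℝ) < ‖z‖ := norm_pos_iff.2 hz
    rw [Kker, abs_mul, abs_of_nonneg (a := (‖z‖ ^ 3)⁻¹) (by positivity)]
    calc (‖z‖ ^ 3)⁻¹ * |z l| ≤ (‖z‖ ^ 3)⁻¹ * ‖z‖ :=
      mul_le_mul_of_nonneg_left (abs_coord_le_norm z l) (by positivity)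
    _ = (‖z‖ ^ 2)⁻¹ := by field_simp

lemma Kker_measurable (l : Fin 3) : Measurable (Kker l) := by
  apply Measurable.mul ((measurable_norm.pow_const 3).inv)
  exact (EuclideanSpace.proj (𝕜 := ℝ) l).continuous.measurable

lemma Kker_locInt (l : Fin 3) : LocallyIntegrable (Kker l) volume := by
  rw [locallyIntegrable_iff]
  intro k hk
  obtain ⟨R, hR⟩ := hk.isBounded.subset_closedBall 0
  apply IntegrableOn.mono_set _ hR
  refine Integrable.mono' (integrableOn_inv_sq_norm R)
    ((Kker_measurable l).aestronglyMeasurable.restrict) (ae_of_all _ fun z => ?_)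
  rw [Real.norm_eq_abs]; exact Kker_abs_le l z

section conv
variable (B : E3 → E3)

def Bco (j : Fin 3) : E3 → ℝ := fun y => B y j

def convK (j l : Fin 3) : E3 → ℝ :=
  MeasureTheory.convolution (Kker l) (Bco B j) (ContinuousLinearMap.mul ℝ ℝ) volume

variable {B}

lemma Bco_contDiff (hB : ContDiff ℝ (⊤ : ℕ∞) B) (j : Fin 3) : ContDiff ℝ (⊤ : ℕ∞) (Bco B j) :=
  (EuclideanSpace.proj (𝕜 := ℝ) j).contDiff.comp hB

lemma Bco_cs (hBc : HasCompactSupport B) (j : Fin 3) : HasCompactSupport (Bco B j) :=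
  hBc.comp_left (g := fun v : E3 => v j) rfl

lemma convK_hasFDerivAt (hB : ContDiff ℝ (⊤ : ℕ∞) B) (hBc : HasCompactSupport B) (j l : Fin 3)
    (x : E3) :
    HasFDerivAt (convK B j l)
      (MeasureTheory.convolution (Kker l) (fderiv ℝ (Bco B j))
        ((ContinuousLinearMap.mul ℝ ℝ).precompR E3) volume x) x :=
  HasCompactSupport.hasFDerivAt_convolution_right _ (Bco_cs hBc j) (Kker_locInt l)
    ((Bco_contDiff hB j).of_le (by simp)) x

lemma convK_differentiable (hB : ContDiff ℝ (⊤ : ℕ∞) B) (hBc : HasCompactSupport B) (j l : Fin 3) :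
    Differentiable ℝ (convK B j l) :=
  fun x => (convK_hasFDerivAt hB hBc j l x).differentiableAt

lemma pderiv_convK (hB : ContDiff ℝ (⊤ : ℕ∞) B) (hBc : HasCompactSupport B) (j l q : Fin 3) (x : E3) :
    pderiv3 q (convK B j l) x
      = ∫ t, Kker l t * fderiv ℝ (Bco B j) (x - t) (EuclideanSpace.single q 1) := by
  rw [pderiv3, (convK_hasFDerivAt hB hBc j l x).fderiv]
  rw [convolution_precompR_apply _ (Kker_locInt l) ((Bco_cs hBc j).fderiv ℝ)
    ((Bco_contDiff hB j).continuous_fderiv (by simp)) x (EuclideanSpace.single q 1)]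
  rfl

lemma integrable_T (hB : ContDiff ℝ (⊤ : ℕ∞) B) (hBc : HasCompactSupport B) (j l q : Fin 3) (x : E3) :
    Integrable (fun t => Kker l t * fderiv ℝ (Bco B j) (x - t) (EuclideanSpace.single q 1))
      volume := by
  have hs : HasCompactSupport fun a => fderiv ℝ (Bco B j) a (EuclideanSpace.single q 1) :=
    ((Bco_cs hBc j).fderiv ℝ).comp_left (g := fun L : E3 →L[ℝ] ℝ => L (EuclideanSpace.single q 1))
      rfl
  have hcont : Continuous fun a => fderiv ℝ (Bco B j) a (EuclideanSpace.single q 1) :=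
    ((Bco_contDiff hB j).continuous_fderiv (by simp)).clm_apply continuous_const
  exact HasCompactSupport.convolutionExists_right (ContinuousLinearMap.mul ℝ ℝ) hs
    (Kker_locInt l) hcont x

lemma sum_T_eq (hB : ContDiff ℝ (⊤ : ℕ∞) B) (hBc : HasCompactSupport B) (j : Fin 3) (x : E3) :
    ∑ q : Fin 3, ∫ t, Kker q t * fderiv ℝ (Bco B j) (x - t) (EuclideanSpace.single q 1)
      = 4 * Real.pi * B x j := by
  rw [← integral_finset_sum _ (fun q _ => integrable_T hB hBc j q q x)]
  have hfun : (fun t => ∑ q : Fin 3,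
      Kker q t * fderiv ℝ (Bco B j) (x - t) (EuclideanSpace.single q 1))
      = fun t => (‖t‖ ^ 3)⁻¹ * fderiv ℝ (Bco B j) (x - t) t := by
    funext t
    rw [clm_apply_decomp (fderiv ℝ (Bco B j) (x - t)) t, Finset.mul_sum]
    apply Finset.sum_congr rfl
    intro q _
    rw [Kker]; ring
  rw [hfun]
  exact core_identity (Bco B j) (Bco_contDiff hB j) (Bco_cs hBc j) x

lemma sum_div_eq (hB : ContDiff ℝ (⊤ : ℕ∞) B) (hBc : HasCompactSupport B)
    (hdiv : ∀ y, div3 B y = 0) (l : Fin 3) (x : E3) :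
    ∑ q : Fin 3, ∫ t, Kker l t * fderiv ℝ (Bco B q) (x - t) (EuclideanSpace.single q 1)
      = 0 := by
  rw [← integral_finset_sum _ (fun q _ => integrable_T hB hBc q l q x)]
  have hfun : (fun t => ∑ q : Fin 3,
      Kker l t * fderiv ℝ (Bco B q) (x - t) (EuclideanSpace.single q 1)) = fun _ => (0:ℝ) := by
    funext t
    rw [← Finset.mul_sum, Fin.sum_univ_three]
    have hd : fderiv ℝ (Bco B 0) (x - t) (EuclideanSpace.single 0 1)
        + fderiv ℝ (Bco B 1) (x - t) (EuclideanSpace.single 1 1)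
        + fderiv ℝ (Bco B 2) (x - t) (EuclideanSpace.single 2 1) = 0 := hdiv (x - t)
    rw [hd, mul_zero]
  rw [hfun, integral_zero]

lemma integrable_yform (hB : ContDiff ℝ (⊤ : ℕ∞) B) (hBc : HasCompactSupport B) (j l : Fin 3)
    (x : E3) : Integrable (fun y => Bco B j y * Kker l (x - y)) volume := by
  have h : Integrable (fun t => Kker l t * Bco B j (x - t)) volume :=
    HasCompactSupport.convolutionExists_right (ContinuousLinearMap.mul ℝ ℝ) (Bco_cs hBc j)
      (Kker_locInt l) (Bco_contDiff hB j).continuous x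
  have h2 := h.comp_sub_left x
  apply h2.congr
  apply ae_of_all
  intro y
  simp only [sub_sub_cancel]
  ring

lemma yform_eq_convK (j l : Fin 3) (x : E3) :
    ∫ y, Bco B j y * Kker l (x - y) = convK B j l x := by
  rw [convK, convolution_def]
  rw [← integral_sub_left_eq_self
    (fun t => (ContinuousLinearMap.mul ℝ ℝ) (Kker l t) (Bco B j (x - t))) volume x]
  congr 1
  funext y
  show Bco B j y * Kker l (x - y) = Kker l (x - y) * Bco B j (x - (x - y))
  rw [sub_sub_cancel]; ring

end conv

def crossInt (B : E3 → E3) (x y : E3) : Fin 3 → ℝ :=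
  ![Bco B 1 y * Kker 2 (x - y) - Bco B 2 y * Kker 1 (x - y),
    Bco B 2 y * Kker 0 (x - y) - Bco B 0 y * Kker 2 (x - y),
    Bco B 0 y * Kker 1 (x - y) - Bco B 1 y * Kker 0 (x - y)]

lemma vec_eq {B : E3 → E3} (x y : E3) : (‖x - y‖ ^ 3)⁻¹ • cross3 (B y) (x - y)
    = (WithLp.equiv 2 (Fin 3 → ℝ)).symm (crossInt B x y) := by
  ext i
  fin_cases i <;>
  · show (‖x - y‖ ^ 3)⁻¹ * _ = _
    simp [cross3, crossInt, Bco, Kker]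
    ring

lemma crossInt_measurable {B : E3 → E3} (hB : ContDiff ℝ (⊤ : ℕ∞) B) (x : E3) :
    Measurable (fun y => crossInt B x y) := by
  rw [measurable_pi_iff]
  intro i
  have hBm : ∀ j : Fin 3, Measurable (Bco B j) := fun j =>
    ((EuclideanSpace.proj (𝕜 := ℝ) j).continuous.comp hB.continuous).measurable
  have hKm : ∀ l : Fin 3, Measurable fun y => Kker l (x - y) := fun l =>
    (Kker_measurable l).comp (measurable_const.sub measurable_id)
  fin_cases i <;>
    · simp only [crossInt, Matrix.cons_val_zero, Matrix.cons_val_one, Matrix.head_cons,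
        Matrix.cons_val_two, Matrix.tail_cons]
      exact ((hBm _).mul (hKm _)).sub ((hBm _).mul (hKm _))

lemma crossInt_integrable {B : E3 → E3} (hB : ContDiff ℝ (⊤ : ℕ∞) B) (hBc : HasCompactSupport B)
    (x : E3) : Integrable (fun y => crossInt B x y) volume := by
  have habs : ∀ j l : Fin 3, Integrable (fun y => |Bco B j y * Kker l (x - y)|) volume :=
    fun j l => (integrable_yform hB hBc j l x).abs
  refine Integrable.mono' (g := fun y =>
      (|Bco B 1 y * Kker 2 (x - y)| + |Bco B 2 y * Kker 1 (x - y)|) +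
      ((|Bco B 2 y * Kker 0 (x - y)| + |Bco B 0 y * Kker 2 (x - y)|) +
       (|Bco B 0 y * Kker 1 (x - y)| + |Bco B 1 y * Kker 0 (x - y)|)))
    (((habs 1 2).add (habs 2 1)).add (((habs 2 0).add (habs 0 2)).add
      ((habs 0 1).add (habs 1 0))))
    (crossInt_measurable hB x).aestronglyMeasurable (ae_of_all _ fun y => ?_)
  rw [pi_norm_le_iff_of_nonneg (by positivity)]
  intro i
  have h1 := abs_sub (Bco B 1 y * Kker 2 (x - y)) (Bco B 2 y * Kker 1 (x - y))
  have h2 := abs_sub (Bco B 2 y * Kker 0 (x - y)) (Bco B 0 y * Kker 2 (x - y))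
  have h3 := abs_sub (Bco B 0 y * Kker 1 (x - y)) (Bco B 1 y * Kker 0 (x - y))
  have n12 := abs_nonneg (Bco B 1 y * Kker 2 (x - y))
  have n21 := abs_nonneg (Bco B 2 y * Kker 1 (x - y))
  have n20 := abs_nonneg (Bco B 2 y * Kker 0 (x - y))
  have n02 := abs_nonneg (Bco B 0 y * Kker 2 (x - y))
  have n01 := abs_nonneg (Bco B 0 y * Kker 1 (x - y))
  have n10 := abs_nonneg (Bco B 1 y * Kker 0 (x - y))
  fin_cases i <;>
    · simp only [crossInt, Real.norm_eq_abs]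
      norm_num
      simp only [abs_mul] at h1 h2 h3 n12 n21 n20 n02 n01 n10
      linarith

lemma cross3_zero_left (v : E3) : cross3 0 v = 0 := by
  ext i
  fin_cases i <;> simp [cross3]

lemma biot_repr {Ω : Set E3} {B : E3 → E3} (hB : ContDiff ℝ (⊤ : ℕ∞) B) (hBc : HasCompactSupport B)
    (hBΩ : tsupport B ⊆ Ω) (x : E3) :
    biotSavart Ω B x = (1 / (4 * Real.pi)) • (WithLp.equiv 2 (Fin 3 → ℝ)).symm
      ![convK B 1 2 x - convK B 2 1 x, convK B 2 0 x - convK B 0 2 x,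
        convK B 0 1 x - convK B 1 0 x] := by
  rw [biotSavart]
  congr 1
  rw [setIntegral_eq_integral_of_forall_compl_eq_zero (fun y hy => ?_)]
  swap
  · have hBy : B y = 0 := image_eq_zero_of_notMem_tsupport (fun h => hy (hBΩ h))
    rw [hBy, cross3_zero_left, smul_zero]
  rw [show (fun y => (‖x - y‖ ^ 3)⁻¹ • cross3 (B y) (x - y))
      = fun y => (PiLp.continuousLinearEquiv 2 ℝ (fun _ : Fin 3 => ℝ)).symm (crossInt B x y)
    from funext (fun y => vec_eq x y)]
  rw [ContinuousLinearEquiv.integral_comp_comm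
    (PiLp.continuousLinearEquiv 2 ℝ (fun _ : Fin 3 => ℝ)).symm (fun y => crossInt B x y)]
  show (WithLp.equiv 2 (Fin 3 → ℝ)).symm (∫ y, crossInt B x y) = _
  apply congrArg
  funext i
  have hproj : (∫ y, crossInt B x y) i
      = ∫ y, crossInt B x y i := by
    have h := ContinuousLinearMap.integral_comp_comm (ContinuousLinearMap.proj (R := ℝ)
      (φ := fun _ : Fin 3 => ℝ) i) (crossInt_integrable hB hBc x)
    exact h.symm
  rw [hproj]
  fin_cases i
  · show ∫ y, (Bco B 1 y * Kker 2 (x - y) - Bco B 2 y * Kker 1 (x - y)) = _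
    rw [integral_sub (integrable_yform hB hBc 1 2 x) (integrable_yform hB hBc 2 1 x),
      yform_eq_convK, yform_eq_convK]
    simp
  · show ∫ y, (Bco B 2 y * Kker 0 (x - y) - Bco B 0 y * Kker 2 (x - y)) = _
    rw [integral_sub (integrable_yform hB hBc 2 0 x) (integrable_yform hB hBc 0 2 x),
      yform_eq_convK, yform_eq_convK]
    simp
  · show ∫ y, (Bco B 0 y * Kker 1 (x - y) - Bco B 1 y * Kker 0 (x - y)) = _
    rw [integral_sub (integrable_yform hB hBc 0 1 x) (integrable_yform hB hBc 1 0 x),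
      yform_eq_convK, yform_eq_convK]
    simp

/-- The Biot–Savart Lemma: if `B` is a smooth compactly supported
divergence-free field supported in `Ω`, then its Biot–Savart vector potential
`A` is differentiable and `curl A = B`. -/
theorem curl_biotSavart (Ω : Set (EuclideanSpace ℝ (Fin 3)))
    (hΩ : MeasurableSet Ω)
    (B : EuclideanSpace ℝ (Fin 3) → EuclideanSpace ℝ (Fin 3))
    (hB : ContDiff ℝ (⊤ : ℕ∞) B) (hBc : HasCompactSupport B) (hBΩ : tsupport B ⊆ Ω)
    (hdiv : ∀ x, div3 B x = 0) :
    Differentiable ℝ (biotSavart Ω B) ∧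
      ∀ x, curl3 (biotSavart Ω B) x = B x := by
  have hπ : Real.pi ≠ 0 := Real.pi_ne_zero
  set c : ℝ := 1 / (4 * Real.pi) with hc
  -- component function identities
  have hA0 : (fun y => biotSavart Ω B y 0) = fun y => c * (convK B 1 2 y - convK B 2 1 y) := by
    funext y
    rw [biot_repr hB hBc hBΩ y]
    show c * (![convK B 1 2 y - convK B 2 1 y, convK B 2 0 y - convK B 0 2 y,
      convK B 0 1 y - convK B 1 0 y] 0) = _
    norm_num
  have hA1 : (fun y => biotSavart Ω B y 1) = fun y => c * (convK B 2 0 y - convK B 0 2 y) := by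
    funext y
    rw [biot_repr hB hBc hBΩ y]
    show c * (![convK B 1 2 y - convK B 2 1 y, convK B 2 0 y - convK B 0 2 y,
      convK B 0 1 y - convK B 1 0 y] 1) = _
    norm_num
  have hA2 : (fun y => biotSavart Ω B y 2) = fun y => c * (convK B 0 1 y - convK B 1 0 y) := by
    funext y
    rw [biot_repr hB hBc hBΩ y]
    show c * (![convK B 1 2 y - convK B 2 1 y, convK B 2 0 y - convK B 0 2 y,
      convK B 0 1 y - convK B 1 0 y] 2) = _
    norm_num
    exact Or.inl rfl
  have hpd : ∀ (j1 l1 j2 l2 q : Fin 3) (x : E3),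
      pderiv3 q (fun y => c * (convK B j1 l1 y - convK B j2 l2 y)) x
        = c * ((∫ t, Kker l1 t * fderiv ℝ (Bco B j1) (x - t) (EuclideanSpace.single q 1))
             - (∫ t, Kker l2 t * fderiv ℝ (Bco B j2) (x - t) (EuclideanSpace.single q 1))) := by
    intro j1 l1 j2 l2 q x
    rw [pderiv3, fderiv_const_mul ((convK_differentiable hB hBc j1 l1 x).fun_sub
        (convK_differentiable hB hBc j2 l2 x)),
      fderiv_fun_sub (convK_differentiable hB hBc j1 l1 x) (convK_differentiable hB hBc j2 l2 x)]
    simp only [ContinuousLinearMap.smul_apply, ContinuousLinearMap.sub_apply, smul_eq_mul]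
    rw [show fderiv ℝ (convK B j1 l1) x (EuclideanSpace.single q 1)
        = pderiv3 q (convK B j1 l1) x from rfl,
      show fderiv ℝ (convK B j2 l2) x (EuclideanSpace.single q 1)
        = pderiv3 q (convK B j2 l2) x from rfl,
      pderiv_convK hB hBc j1 l1 q x, pderiv_convK hB hBc j2 l2 q x]
  constructor
  · -- differentiability
    rw [show biotSavart Ω B = fun x => c •
        (PiLp.continuousLinearEquiv 2 ℝ (fun _ : Fin 3 => ℝ)).symm
        ![convK B 1 2 x - convK B 2 1 x, convK B 2 0 x - convK B 0 2 x,
          convK B 0 1 x - convK B 1 0 x] from funext (fun x => biot_repr hB hBc hBΩ x)]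
    apply Differentiable.fun_const_smul
    apply ((PiLp.continuousLinearEquiv 2 ℝ (fun _ : Fin 3 => ℝ)).symm.differentiable).comp
    rw [differentiable_pi]
    intro i
    fin_cases i <;> simp only [Fin.zero_eta, Fin.mk_one, Matrix.cons_val_zero,
      Matrix.cons_val_one, Matrix.head_cons] <;>
      first
      | exact (convK_differentiable hB hBc 1 2).sub (convK_differentiable hB hBc 2 1)
      | exact (convK_differentiable hB hBc 2 0).sub (convK_differentiable hB hBc 0 2)
      | exact (convK_differentiable hB hBc 0 1).sub (convK_differentiable hB hBc 1 0)
  · intro x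
    have hs0 := sum_T_eq hB hBc 0 x
    have hs1 := sum_T_eq hB hBc 1 x
    have hs2 := sum_T_eq hB hBc 2 x
    have hz0 := sum_div_eq hB hBc hdiv 0 x
    have hz1 := sum_div_eq hB hBc hdiv 1 x
    have hz2 := sum_div_eq hB hBc hdiv 2 x
    rw [Fin.sum_univ_three] at hs0 hs1 hs2 hz0 hz1 hz2
    ext i
    fin_cases i
    · show pderiv3 1 (fun y => biotSavart Ω B y 2) x
        - pderiv3 2 (fun y => biotSavart Ω B y 1) x = B x 0
      rw [hA2, hA1, hpd 0 1 1 0 1 x, hpd 2 0 0 2 2 x]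
      set T011 := ∫ t, Kker 1 t * fderiv ℝ (Bco B 0) (x - t) (EuclideanSpace.single 1 1)
      set T101 := ∫ t, Kker 0 t * fderiv ℝ (Bco B 1) (x - t) (EuclideanSpace.single 1 1)
      set T202 := ∫ t, Kker 0 t * fderiv ℝ (Bco B 2) (x - t) (EuclideanSpace.single 2 1)
      set T022 := ∫ t, Kker 2 t * fderiv ℝ (Bco B 0) (x - t) (EuclideanSpace.single 2 1)
      have hkey : T011 + T022 - T101 - T202 = 4 * Real.pi * B x 0 := by
        set T000 := ∫ t, Kker 0 t * fderiv ℝ (Bco B 0) (x - t) (EuclideanSpace.single 0 1)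
        linarith
      calc c * (T011 - T101) - c * (T202 - T022)
          = c * (T011 + T022 - T101 - T202) := by ring
        _ = c * (4 * Real.pi * B x 0) := by rw [hkey]
        _ = B x 0 := by rw [hc]; field_simp
    · show pderiv3 2 (fun y => biotSavart Ω B y 0) x
        - pderiv3 0 (fun y => biotSavart Ω B y 2) x = B x 1
      rw [hA0, hA2, hpd 1 2 2 1 2 x, hpd 0 1 1 0 0 x]
      set T122 := ∫ t, Kker 2 t * fderiv ℝ (Bco B 1) (x - t) (EuclideanSpace.single 2 1)
      set T212 := ∫ t, Kker 1 t * fderiv ℝ (Bco B 2) (x - t) (EuclideanSpace.single 2 1)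
      set T010 := ∫ t, Kker 1 t * fderiv ℝ (Bco B 0) (x - t) (EuclideanSpace.single 0 1)
      set T100 := ∫ t, Kker 0 t * fderiv ℝ (Bco B 1) (x - t) (EuclideanSpace.single 0 1)
      have hkey : T122 + T100 - T212 - T010 = 4 * Real.pi * B x 1 := by
        set T111 := ∫ t, Kker 1 t * fderiv ℝ (Bco B 1) (x - t) (EuclideanSpace.single 1 1)
        linarith
      calc c * (T122 - T212) - c * (T010 - T100)
          = c * (T122 + T100 - T212 - T010) := by ring
        _ = c * (4 * Real.pi * B x 1) := by rw [hkey]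
        _ = B x 1 := by rw [hc]; field_simp
    · show pderiv3 0 (fun y => biotSavart Ω B y 1) x
        - pderiv3 1 (fun y => biotSavart Ω B y 0) x = B x 2
      rw [hA1, hA0, hpd 2 0 0 2 0 x, hpd 1 2 2 1 1 x]
      set T200 := ∫ t, Kker 0 t * fderiv ℝ (Bco B 2) (x - t) (EuclideanSpace.single 0 1)
      set T020 := ∫ t, Kker 2 t * fderiv ℝ (Bco B 0) (x - t) (EuclideanSpace.single 0 1)
      set T121 := ∫ t, Kker 2 t * fderiv ℝ (Bco B 1) (x - t) (EuclideanSpace.single 1 1)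
      set T211 := ∫ t, Kker 1 t * fderiv ℝ (Bco B 2) (x - t) (EuclideanSpace.single 1 1)
      have hkey : T200 + T211 - T020 - T121 = 4 * Real.pi * B x 2 := by
        set T222 := ∫ t, Kker 2 t * fderiv ℝ (Bco B 2) (x - t) (EuclideanSpace.single 2 1)
        linarith
      calc c * (T200 - T020) - c * (T121 - T211)
          = c * (T200 + T211 - T020 - T121) := by ring
        _ = c * (4 * Real.pi * B x 2) := by rw [hkey]
        _ = B x 2 := by rw [hc]; field_simp

end
end
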